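/- Let (A,𝔤) be a Lie pair and let (M,h) be a regular hermitian right A-module (M finitely generated projective, h an invertible hermitian form). Then there exists a hermitian connection on (M,h), i.e. a connection ∇ : 𝔤 × M → M satisfying δ(h(m₁,m₂)) = h(∇_{δ*}m₁, m₂) + h(m₁, ∇_δ m₂) for all m₁,m₂ ∈ M and δ ∈ 𝔤. -/

import Mathlib

open MulOpposite

/-- A hermitian form on a right `A`-module `M`. -/
def IsHermitianForm {A M : Type*} [Ring A] [StarRing A] [AddCommGroup M]
    [Module Aᵐᵒᵖ M] (h : M → M → A) : Prop :=
  (∀ m₁ m₂, star (h m₁ m₂) = h m₂ m₁) ∧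
  (∀ m₁ m₂ (a : A), h m₁ (op a • m₂) = h m₁ m₂ * a) ∧
  (∀ m₁ m₂ m, h (m₁ + m₂) m = h m₁ m + h m₂ m)

/-- An element of the dual module `M* = Hom_A(M,A)` of the right `A`-module `M`. -/
def IsDualElem {A M : Type*} [Ring A] [AddCommGroup M] [Module Aᵐᵒᵖ M]
    (ω : M → A) : Prop :=
  (∀ m₁ m₂, ω (m₁ + m₂) = ω m₁ + ω m₂) ∧ (∀ (a : A) m, ω (op a • m) = ω m * a)

/-- A hermitian form `h` is invertible if `ĥ : M → M*` is a bijection. -/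
def IsInvertibleForm {A M : Type*} [Ring A] [StarRing A] [AddCommGroup M]
    [Module Aᵐᵒᵖ M] (h : M → M → A) : Prop :=
  (∀ m₁ m₂, (∀ x, h m₁ x = h m₂ x) → m₁ = m₂) ∧
  (∀ ω : M → A, IsDualElem ω → ∃ m, ∀ x, h m x = ω x)

/-- A (ℂ-linear) derivation of the unital ∗-algebra `A`. -/
def IsCDeriv {A : Type*} [Ring A] [Algebra ℂ A] (δ : A → A) : Prop :=
  (∀ x y, δ (x + y) = δ x + δ y) ∧ (∀ (c : ℂ) (x : A), δ (c • x) = c • δ x) ∧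
  (∀ x y, δ (x * y) = δ x * y + x * δ y)

/-- The conjugate derivation `δ*(f) = (δ(f*))*`. -/
def starDeriv {A : Type*} [Ring A] [StarRing A] (δ : A → A) : A → A :=
  fun f => star (δ (star f))

/-- A Lie pair `(A,𝔤)`: `𝔤` is a (complex) Lie algebra of derivations of `A`
which is closed under `δ ↦ δ*`. -/
def IsLiePair {A : Type*} [Ring A] [StarRing A] [Algebra ℂ A]
    (G : Set (A → A)) : Prop :=
  (∀ δ ∈ G, IsCDeriv δ) ∧
  (∀ δ₁ ∈ G, ∀ δ₂ ∈ G, δ₁ + δ₂ ∈ G) ∧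
  (∀ (c : ℂ), ∀ δ ∈ G, c • δ ∈ G) ∧
  (∀ δ₁ ∈ G, ∀ δ₂ ∈ G, (fun x => δ₁ (δ₂ x) - δ₂ (δ₁ x)) ∈ G) ∧
  (∀ δ ∈ G, starDeriv δ ∈ G)

/-- A connection `∇ : 𝔤 × M → M` on a right `A`-module `M`: additive in `M`,
`ℂ`-linear in `𝔤`, and satisfying the Leibniz rule `∇_δ(m·a) = (∇_δ m)·a + m·δ(a)`. -/
def IsConnection {A M : Type*} [Ring A] [StarRing A] [Algebra ℂ A]
    [AddCommGroup M] [Module Aᵐᵒᵖ M]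
    (G : Set (A → A)) (nab : (A → A) → M → M) : Prop :=
  (∀ δ ∈ G, ∀ m₁ m₂, nab δ (m₁ + m₂) = nab δ m₁ + nab δ m₂) ∧
  (∀ δ₁ ∈ G, ∀ δ₂ ∈ G, ∀ (c₁ c₂ : ℂ) (m : M),
    nab (c₁ • δ₁ + c₂ • δ₂) m =
      op (algebraMap ℂ A c₁) • nab δ₁ m + op (algebraMap ℂ A c₂) • nab δ₂ m) ∧
  (∀ δ ∈ G, ∀ (m : M) (a : A), nab δ (op a • m) = op a • nab δ m + op (δ a) • m)

set_option linter.unusedSectionVars false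
section Aux

variable {A M : Type*} [Ring A] [StarRing A] [Algebra ℂ A] [StarModule ℂ A]
  [AddCommGroup M] [Module Aᵐᵒᵖ M]

lemma IsCDeriv.zero' {δ : A → A} (hδ : IsCDeriv δ) : δ 0 = 0 := by
  have h0 : δ 0 = δ 0 + δ 0 := by simpa using (hδ.1 0 0).symm
  exact (left_eq_add.mp h0)

lemma starDeriv_starDeriv' {δ : A → A} : starDeriv (starDeriv δ) = δ := by
  funext x; simp [starDeriv]

lemma starDeriv_star' (δ : A → A) (a : A) : starDeriv δ (star a) = star (δ a) := by
  simp [starDeriv]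

lemma starDeriv_combo' (c₁ c₂ : ℂ) (δ₁ δ₂ : A → A) :
    starDeriv (c₁ • δ₁ + c₂ • δ₂) =
      (star c₁) • starDeriv δ₁ + (star c₂) • starDeriv δ₂ := by
  funext f
  show star ((c₁ • δ₁ + c₂ • δ₂) (star f)) = _
  rw [Pi.add_apply, Pi.smul_apply, Pi.smul_apply, star_add, star_smul, star_smul]
  rfl

/-- componentwise application of `δ` -/
noncomputable def Dmap (δ : A → A) (f : M →₀ Aᵐᵒᵖ) : M →₀ Aᵐᵒᵖ :=
  f.sum fun m a => Finsupp.single m (op (δ a.unop))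

lemma Dmap_single {δ : A → A} (hδ : IsCDeriv δ) (m : M) (a : Aᵐᵒᵖ) :
    Dmap δ (Finsupp.single m a) = Finsupp.single m (op (δ a.unop)) := by
  rw [Dmap, Finsupp.sum_single_index]
  simp [hδ.zero']

lemma Dmap_add {δ : A → A} (hδ : IsCDeriv δ) (f g : M →₀ Aᵐᵒᵖ) :
    Dmap δ (f + g) = Dmap δ f + Dmap δ g := by
  rw [Dmap, Finsupp.sum_add_index' (fun m => by simp [hδ.zero'])
    (fun m b₁ b₂ => by simp [hδ.1, Finsupp.single_add])]
  rfl

lemma Dmap_opsmul {δ : A → A} (hδ : IsCDeriv δ) (a : A) (f : M →₀ Aᵐᵒᵖ) :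
    Dmap δ (op a • f) = op a • Dmap δ f + op (δ a) • f := by
  induction f using Finsupp.induction_linear with
  | zero => simp [Dmap, hδ.zero']
  | add f g hf hg =>
      rw [smul_add, Dmap_add hδ, hf, hg, Dmap_add hδ, smul_add, smul_add]
      abel
  | single m b =>
      rw [Finsupp.smul_single, Dmap_single hδ, Dmap_single hδ, Finsupp.smul_single,
        Finsupp.smul_single, ← Finsupp.single_add]
      congr 1
      have : unop (op a • b) = b.unop * a := rfl
      rw [this, hδ.2.2]
      simp [op_add, op_mul]

lemma Dmap_addDeriv (δ₁ δ₂ : A → A) (f : M →₀ Aᵐᵒᵖ) :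
    Dmap (δ₁ + δ₂) f = Dmap δ₁ f + Dmap δ₂ f := by
  rw [Dmap, Dmap, Dmap, ← Finsupp.sum_add]
  congr 1
  funext m a
  simp [Finsupp.single_add]

lemma Dmap_smulDeriv (c : ℂ) (δ : A → A) (f : M →₀ Aᵐᵒᵖ) :
    Dmap (c • δ) f = op (algebraMap ℂ A c) • Dmap δ f := by
  rw [Dmap, Dmap, Finsupp.smul_sum]
  congr 1
  funext m a
  rw [Finsupp.smul_single]
  congr 1
  show op (c • δ a.unop) = op (algebraMap ℂ A c) * op (δ a.unop)
  rw [Algebra.smul_def, ← op_mul, Algebra.commutes]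

end Aux


section Aux2

variable {A M : Type*} [Ring A] [StarRing A] [Algebra ℂ A] [StarModule ℂ A]
  [AddCommGroup M] [Module Aᵐᵒᵖ M]

section Form
variable {h : M → M → A} (hherm : IsHermitianForm h)
include hherm

lemma star_form (m x : M) : star (h x m) = h m x := hherm.1 x m

lemma form_add_right (m x y : M) : h m (x + y) = h m x + h m y := by
  rw [← hherm.1, hherm.2.2, star_add, hherm.1, hherm.1]

lemma form_opsmul_left (a : A) (g x : M) : h (op a • g) x = star a * h g x := by
  rw [← hherm.1, hherm.2.1, star_mul, hherm.1]

lemma form_zero_left (x : M) : h 0 x = 0 := by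
  have := hherm.2.2 0 0 x
  simpa using this.symm

lemma form_zero_right (m : M) : h m 0 = 0 := by
  rw [← hherm.1, form_zero_left hherm, star_zero]

end Form

/-- the Grassmann connection -/
noncomputable def nabla0 (s : M →ₗ[Aᵐᵒᵖ] (M →₀ Aᵐᵒᵖ)) (δ : A → A) (m : M) : M :=
  Finsupp.linearCombination Aᵐᵒᵖ id (Dmap δ (s m))

variable {s : M →ₗ[Aᵐᵒᵖ] (M →₀ Aᵐᵒᵖ)}

lemma nabla0_add {δ : A → A} (hδ : IsCDeriv δ) (m₁ m₂ : M) :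
    nabla0 s δ (m₁ + m₂) = nabla0 s δ m₁ + nabla0 s δ m₂ := by
  rw [nabla0, map_add, Dmap_add hδ, map_add]; rfl

lemma nabla0_opsmul (hs : Function.LeftInverse (Finsupp.linearCombination Aᵐᵒᵖ id) s)
    {δ : A → A} (hδ : IsCDeriv δ) (a : A) (m : M) :
    nabla0 s δ (op a • m) = op a • nabla0 s δ m + op (δ a) • m := by
  rw [nabla0, map_smul, Dmap_opsmul hδ, map_add, map_smul, map_smul, hs m]; rfl

lemma nabla0_lin (c₁ c₂ : ℂ) (δ₁ δ₂ : A → A) (m : M) :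
    nabla0 s (c₁ • δ₁ + c₂ • δ₂) m =
      op (algebraMap ℂ A c₁) • nabla0 s δ₁ m + op (algebraMap ℂ A c₂) • nabla0 s δ₂ m := by
  rw [nabla0, Dmap_addDeriv, Dmap_smulDeriv, Dmap_smulDeriv, map_add, map_smul, map_smul]; rfl

end Aux2


section Aux3

variable {A M : Type*} [Ring A] [StarRing A] [Algebra ℂ A] [StarModule ℂ A]
  [AddCommGroup M] [Module Aᵐᵒᵖ M]

lemma IsCDeriv.star' {δ : A → A} (hδ : IsCDeriv δ) : IsCDeriv (starDeriv δ) := by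
  refine ⟨fun x y => ?_, fun c x => ?_, fun x y => ?_⟩
  · simp only [starDeriv, star_add, hδ.1]
  · simp only [starDeriv, star_smul, hδ.2.1, star_star]
  · simp only [starDeriv, star_mul, hδ.2.2, star_add, star_star]
    abel

lemma IsCDeriv.combo {δ₁ δ₂ : A → A} (h₁ : IsCDeriv δ₁) (h₂ : IsCDeriv δ₂) (c₁ c₂ : ℂ) :
    IsCDeriv (c₁ • δ₁ + c₂ • δ₂) := by
  refine ⟨fun x y => ?_, fun c x => ?_, fun x y => ?_⟩
  · simp only [Pi.add_apply, Pi.smul_apply, h₁.1, h₂.1, smul_add]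
    abel
  · simp only [Pi.add_apply, Pi.smul_apply, h₁.2.1, h₂.2.1, smul_add, smul_comm c]
  · simp only [Pi.add_apply, Pi.smul_apply, h₁.2.2, h₂.2.2, smul_add, smul_mul_assoc,
      mul_smul_comm, add_mul, mul_add]
    abel

variable (h : M → M → A) (s : M →ₗ[Aᵐᵒᵖ] (M →₀ Aᵐᵒᵖ))

/-- The defect of the Grassmann connection from being hermitian. -/
noncomputable def Fv (δ : A → A) (m x : M) : A :=
  starDeriv δ (h m x) - h (nabla0 s δ m) x - h m (nabla0 s (starDeriv δ) x)

open Classical in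
/-- The correction term. -/
noncomputable def Gam (δ : A → A) (m : M) : M :=
  if hd : ∃ g, ∀ x, h g x = algebraMap ℂ A (2⁻¹ : ℂ) * Fv h s δ m x then hd.choose else 0

variable {h s}
variable (hherm : IsHermitianForm h) (hinv : IsInvertibleForm h)
  (hs : Function.LeftInverse (Finsupp.linearCombination Aᵐᵒᵖ id) s)
include hherm hinv hs

lemma Gam_spec {δ : A → A} (hδ : IsCDeriv δ) (m x : M) :
    h (Gam h s δ m) x = algebraMap ℂ A (2⁻¹ : ℂ) * Fv h s δ m x := by
  have hδs : IsCDeriv (starDeriv δ) := hδ.star'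
  have hdual : IsDualElem (fun x => algebraMap ℂ A (2⁻¹ : ℂ) * Fv h s δ m x) := by
    constructor
    · intro x y
      have hF : Fv h s δ m (x + y) = Fv h s δ m x + Fv h s δ m y := by
        simp only [Fv]
        rw [form_add_right hherm, hδs.1, nabla0_add hδs, form_add_right hherm,
          form_add_right hherm]
        abel
      simp only [hF, mul_add]
    · intro a x
      have hF : Fv h s δ m (op a • x) = Fv h s δ m x * a := by
        simp only [Fv]
        rw [hherm.2.1, hδs.2.2, nabla0_opsmul hs hδs, form_add_right hherm,
          hherm.2.1, hherm.2.1, hherm.2.1]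
        noncomm_ring
      simp only [hF, mul_assoc]
  have hd : ∃ g, ∀ x, h g x = algebraMap ℂ A (2⁻¹ : ℂ) * Fv h s δ m x :=
    hinv.2 _ hdual
  have : Gam h s δ m = hd.choose := by rw [Gam, dif_pos hd]
  rw [this]
  exact hd.choose_spec x

lemma Gam_add {δ : A → A} (hδ : IsCDeriv δ) (m₁ m₂ : M) :
    Gam h s δ (m₁ + m₂) = Gam h s δ m₁ + Gam h s δ m₂ := by
  apply hinv.1
  intro x
  rw [Gam_spec hherm hinv hs hδ, hherm.2.2, Gam_spec hherm hinv hs hδ,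
    Gam_spec hherm hinv hs hδ]
  have hF : Fv h s δ (m₁ + m₂) x = Fv h s δ m₁ x + Fv h s δ m₂ x := by
    simp only [Fv]
    rw [hherm.2.2, hδ.star'.1, nabla0_add hδ, hherm.2.2, hherm.2.2]
    abel
  rw [hF, mul_add]

lemma Gam_opsmul {δ : A → A} (hδ : IsCDeriv δ) (a : A) (m : M) :
    Gam h s δ (op a • m) = op a • Gam h s δ m := by
  apply hinv.1
  intro x
  rw [Gam_spec hherm hinv hs hδ, form_opsmul_left hherm, Gam_spec hherm hinv hs hδ]
  have hF : Fv h s δ (op a • m) x = star a * Fv h s δ m x := by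
    simp only [Fv]
    rw [form_opsmul_left hherm, nabla0_opsmul hs hδ, hherm.2.2,
      form_opsmul_left hherm, form_opsmul_left hherm, form_opsmul_left hherm,
      hδ.star'.2.2, starDeriv_star']
    noncomm_ring
  rw [hF, ← mul_assoc, ← mul_assoc, Algebra.commutes (2⁻¹ : ℂ) (star a)]

lemma Fv_lin (c₁ c₂ : ℂ) {δ₁ δ₂ : A → A} (h₁ : IsCDeriv δ₁) (h₂ : IsCDeriv δ₂) (m x : M) :
    Fv h s (c₁ • δ₁ + c₂ • δ₂) m x =
      algebraMap ℂ A (star c₁) * Fv h s δ₁ m x +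
        algebraMap ℂ A (star c₂) * Fv h s δ₂ m x := by
  simp only [Fv]
  rw [starDeriv_combo', nabla0_lin, nabla0_lin, hherm.2.2, form_opsmul_left hherm,
    form_opsmul_left hherm, form_add_right hherm, hherm.2.1, hherm.2.1,
    ← algebraMap_star_comm, ← algebraMap_star_comm,
    ← Algebra.commutes (star c₁) (h m (nabla0 s (starDeriv δ₁) x)),
    ← Algebra.commutes (star c₂) (h m (nabla0 s (starDeriv δ₂) x))]
  simp only [Pi.add_apply, Pi.smul_apply]
  simp only [Algebra.smul_def]
  noncomm_ring

lemma Gam_lin (c₁ c₂ : ℂ) {δ₁ δ₂ : A → A} (h₁ : IsCDeriv δ₁) (h₂ : IsCDeriv δ₂) (m : M) :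
    Gam h s (c₁ • δ₁ + c₂ • δ₂) m =
      op (algebraMap ℂ A c₁) • Gam h s δ₁ m + op (algebraMap ℂ A c₂) • Gam h s δ₂ m := by
  apply hinv.1
  intro x
  rw [Gam_spec hherm hinv hs (h₁.combo h₂ c₁ c₂), Fv_lin hherm hinv hs c₁ c₂ h₁ h₂,
    hherm.2.2, form_opsmul_left hherm, form_opsmul_left hherm,
    Gam_spec hherm hinv hs h₁, Gam_spec hherm hinv hs h₂,
    ← algebraMap_star_comm, ← algebraMap_star_comm, mul_add,
    ← mul_assoc, ← mul_assoc, ← mul_assoc, ← mul_assoc,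
    Algebra.commutes (2⁻¹ : ℂ) (algebraMap ℂ A (star c₁)),
    Algebra.commutes (2⁻¹ : ℂ) (algebraMap ℂ A (star c₂))]

end Aux3


/-- Let `(A,𝔤)` be a Lie pair and `(M,h)` a regular hermitian right
`A`-module.  Then there exists a hermitian connection on `(M,h)`. -/
theorem exists_hermitian_connection
    {A M : Type*} [Ring A] [StarRing A] [Algebra ℂ A] [StarModule ℂ A]
    [AddCommGroup M] [Module Aᵐᵒᵖ M]
    (G : Set (A → A)) (hG : IsLiePair G)
    (h : M → M → A)
    (hherm : IsHermitianForm h) (hinv : IsInvertibleForm h)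
    (hfin : Module.Finite Aᵐᵒᵖ M) (hproj : Module.Projective Aᵐᵒᵖ M) :
    ∃ nab : (A → A) → M → M, IsConnection G nab ∧
      ∀ δ ∈ G, ∀ m₁ m₂, δ (h m₁ m₂) =
        h (nab (starDeriv δ) m₁) m₂ + h m₁ (nab δ m₂) := by
  classical
  obtain ⟨s, hs⟩ := hproj.out
  have hder : ∀ δ ∈ G, IsCDeriv δ := hG.1
  refine ⟨fun δ m => nabla0 s δ m + Gam h s δ m, ⟨?_, ?_, ?_⟩, ?_⟩
  · intro δ hδ m₁ m₂
    dsimp only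
    rw [nabla0_add (hder δ hδ), Gam_add hherm hinv hs (hder δ hδ)]
    abel
  · intro δ₁ h₁ δ₂ h₂ c₁ c₂ m
    dsimp only
    rw [nabla0_lin, Gam_lin hherm hinv hs c₁ c₂ (hder _ h₁) (hder _ h₂), smul_add, smul_add]
    abel
  · intro δ hδ m a
    dsimp only
    rw [nabla0_opsmul hs (hder δ hδ), Gam_opsmul hherm hinv hs (hder δ hδ), smul_add]
    abel
  · intro δ hδ m₁ m₂
    dsimp only
    have hδd := hder δ hδ
    have hsd : IsCDeriv (starDeriv δ) := hδd.star'
    rw [hherm.2.2, form_add_right hherm]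
    have hE1 : h (Gam h s (starDeriv δ) m₁) m₂ = algebraMap ℂ A (2⁻¹ : ℂ) *
        (δ (h m₁ m₂) - h (nabla0 s (starDeriv δ) m₁) m₂ - h m₁ (nabla0 s δ m₂)) := by
      rw [Gam_spec hherm hinv hs hsd]
      simp only [Fv]
      rw [starDeriv_starDeriv']
    have hstarF : star (Fv h s δ m₂ m₁) =
        δ (h m₁ m₂) - h (nabla0 s (starDeriv δ) m₁) m₂ - h m₁ (nabla0 s δ m₂) := by
      simp only [Fv, star_sub]
      rw [hherm.1, hherm.1]
      have : star (starDeriv δ (h m₂ m₁)) = δ (h m₁ m₂) := by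
        rw [starDeriv, star_star, hherm.1]
      rw [this]
      abel
    have hE2 : h m₁ (Gam h s δ m₂) = algebraMap ℂ A (2⁻¹ : ℂ) *
        (δ (h m₁ m₂) - h (nabla0 s (starDeriv δ) m₁) m₂ - h m₁ (nabla0 s δ m₂)) := by
      rw [← hherm.1, Gam_spec hherm hinv hs hδd, star_mul, hstarF,
        ← algebraMap_star_comm]
      have h12 : star (2⁻¹ : ℂ) = 2⁻¹ := by simp
      rw [h12, ← Algebra.commutes]
    rw [hE1, hE2]
    have hEE : algebraMap ℂ A (2⁻¹ : ℂ) *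
          (δ (h m₁ m₂) - h (nabla0 s (starDeriv δ) m₁) m₂ - h m₁ (nabla0 s δ m₂)) +
        algebraMap ℂ A (2⁻¹ : ℂ) *
          (δ (h m₁ m₂) - h (nabla0 s (starDeriv δ) m₁) m₂ - h m₁ (nabla0 s δ m₂)) =
        δ (h m₁ m₂) - h (nabla0 s (starDeriv δ) m₁) m₂ - h m₁ (nabla0 s δ m₂) := by
      rw [← add_mul, ← map_add]
      norm_num
    have key : h (nabla0 s (starDeriv δ) m₁) m₂ + algebraMap ℂ A (2⁻¹ : ℂ) *
          (δ (h m₁ m₂) - h (nabla0 s (starDeriv δ) m₁) m₂ - h m₁ (nabla0 s δ m₂)) +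
        (h m₁ (nabla0 s δ m₂) + algebraMap ℂ A (2⁻¹ : ℂ) *
          (δ (h m₁ m₂) - h (nabla0 s (starDeriv δ) m₁) m₂ - h m₁ (nabla0 s δ m₂))) =
        h (nabla0 s (starDeriv δ) m₁) m₂ + h m₁ (nabla0 s δ m₂) +
          (algebraMap ℂ A (2⁻¹ : ℂ) *
            (δ (h m₁ m₂) - h (nabla0 s (starDeriv δ) m₁) m₂ - h m₁ (nabla0 s δ m₂)) +
           algebraMap ℂ A (2⁻¹ : ℂ) *
            (δ (h m₁ m₂) - h (nabla0 s (starDeriv δ) m₁) m₂ - h m₁ (nabla0 s δ m₂))) := by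
      abel
    rw [key, hEE]
    abel
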